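/- arXiv:1510.03606 — 3 statements merged into one kernel-verified Lean document; each statement's English description precedes it below -/
import Mathlib

section
/- For every integer N ≥ 1, the measure G_N with density 1/(log((N+1)/N)(x+N)) on [0,1] is invariant under T_N, i.e. G_N(T_N⁻¹(A)) = G_N(A) for every Borel set A ⊆ [0,1]. -/
noncomputable def TN (N : ℕ) (x : ℝ) : ℝ :=
  if x = 0 then 0 else (N : ℝ) / x - ⌊(N : ℝ) / x⌋

noncomputable def GN (N : ℕ) : MeasureTheory.Measure ℝ :=
  (MeasureTheory.volume.restrict (Set.Icc (0 : ℝ) 1)).withDensity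
    (fun x => ENNReal.ofReal (1 / (Real.log ((N + 1) / N) * (x + N))))

open scoped ENNReal
open MeasureTheory Set Filter Topology

lemma TN_measurable (N : ℕ) : Measurable (TN N) := by
  have : TN N = fun x => if x = 0 then 0 else Int.fract ((N : ℝ) / x) := by
    funext x; rfl
  rw [this]
  exact Measurable.ite (measurableSet_singleton 0) measurable_const
    ((measurable_const.div measurable_id).fract)

/-- 1-d change of variables for lower integrals. -/
lemma my_lintegral_image {s : Set ℝ} {f f' : ℝ → ℝ} (hs : MeasurableSet s)
    (hf' : ∀ x ∈ s, HasDerivWithinAt f (f' x) s x) (hf : Set.InjOn f s) (g : ℝ → ℝ≥0∞) :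
    ∫⁻ x in f '' s, g x = ∫⁻ x in s, ENNReal.ofReal |f' x| * g (f x) := by
  simpa only [ContinuousLinearMap.det_toSpanSingleton] using
    MeasureTheory.lintegral_image_eq_lintegral_abs_det_fderiv_mul MeasureTheory.volume hs
      (fun x hx => (hf' x hx).hasFDerivWithinAt) hf g

/-- The branch images: for `A ⊆ [0,1]`,
`(fun y => N/(N+j+y)) '' (A ∩ [0,1)) = (N/(N+j+1), N/(N+j)] ∩ {x | N/x - (N+j) ∈ A}`. -/
lemma branch_image (N : ℕ) (hN : 1 ≤ N) (j : ℕ) (A : Set ℝ) :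
    (fun y => (N : ℝ) / ((N : ℝ) + j + y)) '' (A ∩ Set.Ico 0 1) =
      Set.Ioc ((N : ℝ) / ((N : ℝ) + j + 1)) ((N : ℝ) / ((N : ℝ) + j)) ∩
        (fun x => (N : ℝ) / x - ((N : ℝ) + j)) ⁻¹' A := by
  have hN0 : (0 : ℝ) < N := by exact_mod_cast hN
  have hNj : (0 : ℝ) < (N : ℝ) + j := by positivity
  ext x
  constructor
  · rintro ⟨y, ⟨hyA, hy0, hy1⟩, rfl⟩
    have hc : (0 : ℝ) < (N : ℝ) + j + y := by linarith
    refine ⟨⟨?_, ?_⟩, ?_⟩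
    · exact div_lt_div_of_pos_left hN0 hc (by linarith)
    · exact div_le_div_of_nonneg_left hN0.le hNj (by linarith)
    · show (N : ℝ) / ((N : ℝ) / ((N : ℝ) + j + y)) - ((N : ℝ) + j) ∈ A
      rw [div_div_cancel₀ hN0.ne']
      have : (N : ℝ) + j + y - ((N : ℝ) + j) = y := by ring
      rw [this]; exact hyA
  · rintro ⟨⟨hx1, hx2⟩, hxA⟩
    have hx0 : (0 : ℝ) < x := lt_trans (by positivity) hx1
    have h2 : x * ((N : ℝ) + j) ≤ N := (le_div_iff₀ hNj).1 hx2
    have h1 : (N : ℝ) < x * ((N : ℝ) + j + 1) := (div_lt_iff₀ (by positivity)).1 hx1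
    have hNx : (N : ℝ) + j ≤ (N : ℝ) / x := (le_div_iff₀ hx0).2 (by nlinarith)
    have hNx' : (N : ℝ) / x < (N : ℝ) + j + 1 := (div_lt_iff₀ hx0).2 (by nlinarith)
    refine ⟨(N : ℝ) / x - ((N : ℝ) + j), ⟨hxA, by constructor <;> [linarith; linarith]⟩, ?_⟩
    show (N : ℝ) / ((N : ℝ) + j + ((N : ℝ) / x - ((N : ℝ) + j))) = x
    rw [show (N : ℝ) + j + ((N : ℝ) / x - ((N : ℝ) + j)) = (N : ℝ) / x by ring,
      div_div_cancel₀ hN0.ne']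

theorem GN_invariant (N : ℕ) (hN : 1 ≤ N) :
    ∀ A : Set ℝ, MeasurableSet A → A ⊆ Set.Icc (0 : ℝ) 1 →
      GN N (TN N ⁻¹' A) = GN N A := by
  intro A hA hA1
  have hN0 : (0 : ℝ) < N := by exact_mod_cast hN
  set L : ℝ := Real.log ((N + 1) / N) with hLdef
  have hL : 0 < L := Real.log_pos ((one_lt_div hN0).2 (by linarith))
  set d : ℝ → ℝ≥0∞ := fun x => ENNReal.ofReal (1 / (L * (x + N))) with hd
  -- branch maps
  set f : ℕ → ℝ → ℝ := fun j y => (N : ℝ) / ((N : ℝ) + j + y) with hf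
  set A' : Set ℝ := A ∩ Set.Ico 0 1 with hA'
  have hA'm : MeasurableSet A' := hA.inter measurableSet_Ico
  -- basic application of withDensity
  have happ : ∀ s : Set ℝ, MeasurableSet s → GN N s = ∫⁻ x in s ∩ Set.Icc 0 1, d x := by
    intro s hs
    rw [GN, withDensity_apply _ hs, Measure.restrict_restrict hs]
  -- key set decomposition
  have hdecomp : (TN N ⁻¹' A) ∩ Set.Ioc 0 1 = ⋃ j : ℕ, f j '' A' := by
    ext x
    simp only [Set.mem_inter_iff, Set.mem_preimage, Set.mem_iUnion]
    constructor
    · rintro ⟨hxA, hx0, hx1⟩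
      have hx0' : x ≠ 0 := ne_of_gt hx0
      have hr : (N : ℝ) ≤ (N : ℝ) / x := (le_div_iff₀ hx0).2 (by nlinarith)
      set r : ℝ := (N : ℝ) / x with hrdef
      have hk : (N : ℤ) ≤ ⌊r⌋ := Int.le_floor.2 (by exact_mod_cast hr)
      refine ⟨(⌊r⌋ - N).toNat, Int.fract r, ⟨?_, Int.fract_nonneg r, Int.fract_lt_one r⟩, ?_⟩
      · have hTx : TN N x = Int.fract ((N : ℝ) / x) := by
          unfold TN; rw [if_neg hx0', Int.self_sub_floor]
        rw [hTx] at hxA; exact hxA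
      · have hcast : ((N : ℝ) + ((⌊r⌋ - N).toNat : ℝ)) = (⌊r⌋ : ℝ) := by
          have : ((⌊r⌋ - N).toNat : ℤ) = ⌊r⌋ - N := Int.toNat_of_nonneg (by omega)
          have := congrArg (fun z : ℤ => (z : ℝ)) this
          push_cast at this ⊢
          linarith
        have : (N : ℝ) + ((⌊r⌋ - N).toNat : ℝ) + Int.fract r = r := by
          rw [hcast]; exact Int.floor_add_fract r
        show (N:ℝ) / ((N:ℝ) + ((⌊r⌋ - N).toNat : ℝ) + Int.fract r) = x
        rw [this, hrdef]
        exact div_div_cancel₀ hN0.ne'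
    · rintro ⟨j, y, ⟨hyA, hy0, hy1⟩, rfl⟩
      have hc : (0 : ℝ) < (N : ℝ) + j + y := by positivity
      have hx0 : (0 : ℝ) < f j y := by positivity
      have hr : (N : ℝ) / (f j y) = (N : ℝ) + j + y := div_div_cancel₀ hN0.ne'
      have hfloor : ⌊(N : ℝ) + j + y⌋ = (N : ℤ) + j := by
        rw [show (N : ℝ) + j + y = (((N : ℤ) + (j : ℤ) : ℤ) : ℝ) + y by push_cast; ring,
          Int.floor_intCast_add, Int.floor_eq_zero_iff.2 ⟨hy0, hy1⟩, add_zero]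
      refine ⟨?_, hx0, ?_⟩
      · have : TN N (f j y) = y := by
          rw [TN, if_neg hx0.ne', hr, hfloor]; push_cast; ring
        rw [this]; exact hyA
      · rw [hf]
        rw [div_le_one hc]
        linarith
  -- measurability and disjointness of branches
  have himeq : ∀ j : ℕ, f j '' A' =
      Set.Ioc ((N : ℝ) / ((N : ℝ) + j + 1)) ((N : ℝ) / ((N : ℝ) + j)) ∩
        (fun x => (N : ℝ) / x - ((N : ℝ) + j)) ⁻¹' A := fun j => branch_image N hN j A
  have himm : ∀ j : ℕ, MeasurableSet (f j '' A') := by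
    intro j
    rw [himeq j]
    exact measurableSet_Ioc.inter
      (((measurable_const.div measurable_id).sub measurable_const) hA)
  have hdisj : Pairwise (Function.onFun Disjoint fun j => f j '' A') := by
    have key : ∀ i j : ℕ, i < j → Disjoint (f i '' A') (f j '' A') := by
      intro i j hij
      rw [himeq i, himeq j]
      refine Disjoint.mono inter_subset_left inter_subset_left ?_
      rw [Set.Ioc_disjoint_Ioc]
      refine le_trans (min_le_right _ _) (le_trans ?_ (le_max_left _ _))
      apply div_le_div_of_nonneg_left hN0.le (by positivity)
      push_cast; have : (i : ℝ) + 1 ≤ j := by exact_mod_cast hij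
      linarith
    intro i j hij
    rcases lt_or_gt_of_ne hij with h | h
    · exact key i j h
    · exact (key j i h).symm
  -- change of variables on each branch
  have hbranch : ∀ j : ℕ, ∫⁻ x in f j '' A', d x =
      ∫⁻ y in A', ENNReal.ofReal |(-(N : ℝ) / ((N : ℝ) + j + y) ^ 2)| * d (f j y) := by
    intro j
    refine my_lintegral_image hA'm ?_ ?_ d
    · intro y hy
      have hy' : y ∈ Set.Ico (0:ℝ) 1 := hy.2
      have hc : (0 : ℝ) < (N : ℝ) + j + y := by have := hy'.1; positivity
      have h1 : HasDerivAt (fun y : ℝ => (N : ℝ) + j + y) 1 y := by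
        simpa using (hasDerivAt_id y).const_add ((N : ℝ) + j)
      have h2 := (hasDerivAt_const y (N : ℝ)).div h1 hc.ne'
      have h3 : HasDerivAt (f j) (-(N : ℝ) / ((N : ℝ) + j + y) ^ 2) y := by
        have e : ((0:ℝ) * ((N:ℝ) + j + y) - N * 1) / ((N:ℝ) + j + y) ^ 2 = -(N:ℝ) / ((N:ℝ) + j + y) ^ 2 := by ring
        rw [e] at h2; exact h2
      exact h3.hasDerivWithinAt
    · intro y1 hy1 y2 hy2 heq
      have hc1 : (0 : ℝ) < (N : ℝ) + j + y1 := by have := hy1.2.1; positivity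
      have hc2 : (0 : ℝ) < (N : ℝ) + j + y2 := by have := hy2.2.1; positivity
      simp only [hf] at heq
      rw [div_eq_div_iff hc1.ne' hc2.ne'] at heq
      nlinarith
  -- pointwise integrand simplification
  have hpoint : ∀ j : ℕ, ∀ y ∈ A',
      ENNReal.ofReal |(-(N : ℝ) / ((N : ℝ) + j + y) ^ 2)| * d (f j y) =
        ENNReal.ofReal (1 / L * (1 / ((N : ℝ) + j + y) - 1 / ((N : ℝ) + j + 1 + y))) := by
    intro j y hy
    have hy0 : (0 : ℝ) ≤ y := hy.2.1
    have hc : (0 : ℝ) < (N : ℝ) + j + y := by positivity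
    have habs : |(-(N : ℝ) / ((N : ℝ) + j + y) ^ 2)| = (N : ℝ) / ((N : ℝ) + j + y) ^ 2 := by
      rw [abs_div, abs_neg, abs_of_nonneg hN0.le, abs_of_nonneg (by positivity)]
    rw [habs, hd]
    rw [← ENNReal.ofReal_mul (by positivity)]
    congr 1
    have hfx : f j y + (N : ℝ) = (N : ℝ) / ((N : ℝ) + j + y) + N := rfl
    rw [hfx]
    have hpos : (0 : ℝ) < (N : ℝ) / ((N : ℝ) + j + y) + N := by positivity
    field_simp
    ring
  -- telescoping sum
  have htsum : ∀ y ∈ A',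
      (∑' j : ℕ, ENNReal.ofReal (1 / L * (1 / ((N : ℝ) + j + y) - 1 / ((N : ℝ) + j + 1 + y))))
        = d y := by
    intro y hy
    have hy0 : (0 : ℝ) ≤ y := hy.2.1
    set F : ℕ → ℝ := fun j => 1 / L * (1 / ((N : ℝ) + j + y)) with hF
    set t : ℕ → ℝ := fun j => 1 / L * (1 / ((N : ℝ) + j + y) - 1 / ((N : ℝ) + j + 1 + y)) with ht
    have htF : ∀ j, t j = F j - F (j + 1) := by
      intro j; simp only [ht, hF]; push_cast; ring
    have hnn : ∀ j, 0 ≤ t j := by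
      intro j
      have hc : (0 : ℝ) < (N : ℝ) + j + y := by positivity
      have : 1 / ((N : ℝ) + j + 1 + y) ≤ 1 / ((N : ℝ) + j + y) :=
        one_div_le_one_div_of_le hc (by linarith)
      have : 0 ≤ 1 / ((N : ℝ) + j + y) - 1 / ((N : ℝ) + j + 1 + y) := by linarith
      positivity
    have hFlim : Tendsto F atTop (𝓝 0) := by
      have h1 : Tendsto (fun j : ℕ => (N : ℝ) + j + y) atTop atTop :=
        tendsto_atTop_add_const_right _ y
          (tendsto_atTop_add_const_left _ _ tendsto_natCast_atTop_atTop)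
      have h2 : Tendsto (fun j : ℕ => 1 / ((N : ℝ) + j + y)) atTop (𝓝 0) := by
        simpa [one_div, Pi.inv_def] using h1.inv_tendsto_atTop
      have := h2.const_mul (1 / L)
      simpa [hF, mul_zero] using this
    have hsum : HasSum t (F 0) := by
      rw [hasSum_iff_tendsto_nat_of_nonneg hnn]
      have hps : ∀ n, ∑ i ∈ Finset.range n, t i = F 0 - F n := by
        intro n
        calc ∑ i ∈ Finset.range n, t i = ∑ i ∈ Finset.range n, (F i - F (i + 1)) :=
              Finset.sum_congr rfl (fun i _ => htF i)
          _ = F 0 - F n := Finset.sum_range_sub' F n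
      simp only [hps]
      simpa using tendsto_const_nhds.sub hFlim
    calc (∑' j : ℕ, ENNReal.ofReal (t j)) = ENNReal.ofReal (∑' j, t j) :=
          (ENNReal.ofReal_tsum_of_nonneg hnn hsum.summable).symm
      _ = ENNReal.ofReal (F 0) := by rw [hsum.tsum_eq]
      _ = d y := by
          rw [hd, hF]
          congr 1
          push_cast
          rw [add_zero, div_mul_div_comm, one_mul, add_comm y (N : ℝ)]
  -- now assemble
  have hB0 : ∀ᵐ x : ℝ, x ≠ 0 := by
    rw [ae_iff]
    simpa using (Real.volume_singleton (a := 0))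
  have hB1 : ∀ᵐ x : ℝ, x ≠ 1 := by
    rw [ae_iff]
    simpa using (Real.volume_singleton (a := 1))
  have step1 : GN N (TN N ⁻¹' A) = ∫⁻ x in ⋃ j : ℕ, f j '' A', d x := by
    rw [happ _ ((TN_measurable N) hA)]
    rw [← hdecomp]
    apply setLIntegral_congr
    filter_upwards [hB0] with x hx
    simp only [Set.mem_inter_iff, Set.mem_Icc, Set.mem_Ioc, eq_iff_iff]
    constructor
    · rintro ⟨h1, h2, h3⟩
      exact ⟨h1, lt_of_le_of_ne h2 (Ne.symm hx), h3⟩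
    · rintro ⟨h1, h2, h3⟩
      exact ⟨h1, h2.le, h3⟩
  have step2 : (∫⁻ x in ⋃ j : ℕ, f j '' A', d x) = ∑' j : ℕ, ∫⁻ x in f j '' A', d x :=
    lintegral_iUnion himm hdisj d
  have step3 : ∀ j : ℕ, (∫⁻ x in f j '' A', d x) =
      ∫⁻ y in A', ENNReal.ofReal (1 / L * (1 / ((N : ℝ) + j + y) - 1 / ((N : ℝ) + j + 1 + y))) := by
    intro j
    rw [hbranch j]
    exact setLIntegral_congr_fun hA'm (fun y hy => hpoint j y hy)
  have step4 : (∑' j : ℕ, ∫⁻ y in A',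
      ENNReal.ofReal (1 / L * (1 / ((N : ℝ) + j + y) - 1 / ((N : ℝ) + j + 1 + y))))
        = ∫⁻ y in A', d y := by
    rw [← lintegral_tsum]
    · exact setLIntegral_congr_fun hA'm (fun y hy => htsum y hy)
    · intro j
      apply Measurable.aemeasurable
      apply Measurable.ennreal_ofReal
      apply Measurable.const_mul
      exact (measurable_const.div ((measurable_const.add measurable_id))).sub
        (measurable_const.div ((measurable_const.add measurable_id)))
  have step5 : (∫⁻ y in A', d y) = GN N A := by
    rw [happ _ hA]
    apply setLIntegral_congr
    filter_upwards [hB1] with x hx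
    simp only [hA', Set.mem_inter_iff, Set.mem_Ico, Set.mem_Icc, eq_iff_iff]
    constructor
    · rintro ⟨h1, h2, h3⟩
      exact ⟨h1, h2, h3.le⟩
    · rintro ⟨h1, h2, h3⟩
      exact ⟨h1, h2, lt_of_le_of_ne h3 hx⟩
  rw [step1, step2]
  rw [tsum_congr step3, step4, step5]
end

section
/- For every integer N ≥ 1 and all x', x'' ∈ [0,1] with x' ≠ x'', the sum over integers i ≥ N of V_{N,i}(x')·|u_{N,i}(x') − u_{N,i}(x'')|/|x' − x''| is bounded by a constant r_1 < ∞ (the contraction coefficient r_1 of the associated RSCC is finite). -/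
theorem r1_finite (N : ℕ) (hN : 1 ≤ N) :
    ∃ r : ℝ, ∀ x' ∈ Set.Icc (0 : ℝ) 1, ∀ x'' ∈ Set.Icc (0 : ℝ) 1, x' ≠ x'' →
      (∑' k : ℕ, (x' + N) / ((x' + (N + k : ℕ)) * (x' + (N + k : ℕ) + 1)) *
        |(N : ℝ) / (x' + (N + k : ℕ)) - (N : ℝ) / (x'' + (N + k : ℕ))| / |x' - x''|) ≤ r := by
  have hs : Summable (fun k : ℕ => ((N:ℝ)+1) * N * (1 / ((k:ℝ)+1)^2)) := by
    apply Summable.mul_left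
    have h1 : Summable (fun n : ℕ => 1 / (n : ℝ) ^ 2) :=
      Real.summable_one_div_nat_pow.mpr (by norm_num)
    have h2 := (summable_nat_add_iff 1).mpr h1
    simpa using h2
  refine ⟨∑' k : ℕ, ((N:ℝ)+1) * N * (1 / ((k:ℝ)+1)^2), ?_⟩
  intro x' hx' x'' hx'' hne
  have hx'0 := hx'.1
  have hx''0 := hx''.1
  have hx'1 := hx'.2
  have hN1 : (1:ℝ) ≤ (N:ℝ) := by exact_mod_cast hN
  have habsne : |x' - x''| ≠ 0 := abs_ne_zero.mpr (sub_ne_zero.mpr hne)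
  have key : ∀ k : ℕ,
      (x' + N) / ((x' + (N + k : ℕ)) * (x' + (N + k : ℕ) + 1)) *
        |(N : ℝ) / (x' + (N + k : ℕ)) - (N : ℝ) / (x'' + (N + k : ℕ))| / |x' - x''|
      ≤ ((N:ℝ)+1) * N * (1 / ((k:ℝ)+1)^2) := by
    intro k
    have hik : (k:ℝ) + 1 ≤ ((N + k : ℕ) : ℝ) := by push_cast; linarith
    have ha : (k:ℝ) + 1 ≤ x' + (N + k : ℕ) := by linarith
    have hb : (k:ℝ) + 1 ≤ x'' + (N + k : ℕ) := by linarith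
    have hk1 : (0:ℝ) < (k:ℝ) + 1 := by positivity
    have ha0 : 0 < x' + (N + k : ℕ) := lt_of_lt_of_le hk1 ha
    have hb0 : 0 < x'' + (N + k : ℕ) := lt_of_lt_of_le hk1 hb
    have ha1 : 0 < x' + (N + k : ℕ) + 1 := by linarith
    have hdiff : (N:ℝ) / (x' + (N + k : ℕ)) - (N:ℝ) / (x'' + (N + k : ℕ))
        = (N:ℝ) * (x'' - x') / ((x' + (N + k : ℕ)) * (x'' + (N + k : ℕ))) := by
      field_simp
      ring
    have habs : |(N:ℝ) / (x' + (N + k : ℕ)) - (N:ℝ) / (x'' + (N + k : ℕ))|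
        = (N:ℝ) * |x' - x''| / ((x' + (N + k : ℕ)) * (x'' + (N + k : ℕ))) := by
      rw [hdiff, abs_div, abs_mul, abs_of_pos (mul_pos ha0 hb0), abs_sub_comm x'' x',
        abs_of_nonneg (by positivity : (0:ℝ) ≤ (N:ℝ))]
    rw [habs]
    have heq : (x' + N) / ((x' + (N + k : ℕ)) * (x' + (N + k : ℕ) + 1)) *
        ((N:ℝ) * |x' - x''| / ((x' + (N + k : ℕ)) * (x'' + (N + k : ℕ)))) / |x' - x''|
        = (x' + N) * N /
          ((x' + (N + k : ℕ)) * (x' + (N + k : ℕ) + 1) * ((x' + (N + k : ℕ)) * (x'' + (N + k : ℕ)))) := by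
      field_simp
    rw [heq]
    have hnum : (x' + N) * N ≤ ((N:ℝ)+1) * N := by
      apply mul_le_mul_of_nonneg_right (by linarith) (Nat.cast_nonneg N)
    have h1 : ((k:ℝ)+1)^2 ≤ (x' + (N + k : ℕ)) * (x'' + (N + k : ℕ)) := by nlinarith
    have h2 : (1:ℝ) ≤ (x' + (N + k : ℕ)) * (x' + (N + k : ℕ) + 1) := by nlinarith
    have hden : ((k:ℝ)+1)^2 ≤
        (x' + (N + k : ℕ)) * (x' + (N + k : ℕ) + 1) * ((x' + (N + k : ℕ)) * (x'' + (N + k : ℕ))) :=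
      le_trans h1 (le_mul_of_one_le_left (le_of_lt (mul_pos ha0 hb0)) h2)
    calc (x' + N) * N /
          ((x' + (N + k : ℕ)) * (x' + (N + k : ℕ) + 1) * ((x' + (N + k : ℕ)) * (x'' + (N + k : ℕ))))
        ≤ (((N:ℝ)+1) * N) / ((k:ℝ)+1)^2 :=
          div_le_div₀ (by positivity) hnum (by positivity) hden
      _ = ((N:ℝ)+1) * N * (1 / ((k:ℝ)+1)^2) := by ring
  have hf0 : ∀ k : ℕ, 0 ≤ (x' + N) / ((x' + (N + k : ℕ)) * (x' + (N + k : ℕ) + 1)) *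
        |(N : ℝ) / (x' + (N + k : ℕ)) - (N : ℝ) / (x'' + (N + k : ℕ))| / |x' - x''| := by
    intro k
    have hi0 : (0:ℝ) ≤ ((N + k : ℕ) : ℝ) := Nat.cast_nonneg _
    apply div_nonneg _ (abs_nonneg _)
    apply mul_nonneg _ (abs_nonneg _)
    apply div_nonneg (by linarith)
    apply mul_nonneg (by linarith) (by linarith)
  exact Summable.tsum_le_tsum key (Summable.of_nonneg_of_le hf0 key hs) hs
end

section
/- Every irrational x ∈ (0,1) has a convergent N-continued fraction expansion: with digits a_n(x) = ⌊N/T_N^{n-1}(x)⌋, the finite continued fractions [a_1,…,a_n]_N with numerators N converge to x as n → ∞. -/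
/-- The finite `N`-continued fraction `[a 0, a 1, …, a (n-1)]_N
    = N / (a 0 + N / (a 1 + ⋯ + N / a (n-1)))`. -/
noncomputable def cfValN (N : ℕ) : ℕ → (ℕ → ℤ) → ℝ
  | 0, _ => 0
  | n + 1, a => (N : ℝ) / ((a 0 : ℝ) + cfValN N n (fun k => a (k + 1)))

/-- The value of the continued fraction with tail `t`. -/
noncomputable def Fcf (N : ℕ) : ℕ → (ℕ → ℤ) → ℝ → ℝ
  | 0, _, t => t
  | n + 1, a, t => (N : ℝ) / ((a 0 : ℝ) + Fcf N n (fun k => a (k + 1)) t)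

lemma cfValN_eq_Fcf (N : ℕ) : ∀ n (a : ℕ → ℤ), cfValN N n a = Fcf N n a 0 := by
  intro n
  induction n with
  | zero => intro a; rfl
  | succ n ih => intro a; simp [cfValN, Fcf, ih]

lemma TN_mem (N : ℕ) (hN : 1 ≤ N) {x : ℝ} (hx : x ∈ Set.Ioo (0:ℝ) 1) (hirr : Irrational x) :
    TN N x ∈ Set.Ioo (0:ℝ) 1 ∧ Irrational (TN N x) := by
  have hx0 : x ≠ 0 := ne_of_gt hx.1
  have hdiv : Irrational ((N:ℝ) / x) := hirr.natCast_div (by omega)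
  have hTN : TN N x = Int.fract ((N:ℝ)/x) := by
    rw [TN, if_neg hx0]; rfl
  have hirr' : Irrational (TN N x) := by
    rw [hTN, Int.fract]
    exact hdiv.sub_intCast _
  refine ⟨⟨?_, ?_⟩, hirr'⟩
  · rcases lt_or_eq_of_le (Int.fract_nonneg ((N:ℝ)/x)) with h | h
    · rwa [hTN]
    · exact absurd (hTN ▸ h.symm) (fun he => hirr'.ne_rat 0 (by simp [← he]))
  · rw [hTN]; exact Int.fract_lt_one _

lemma digit_ge (N : ℕ) (hN : 1 ≤ N) {x : ℝ} (hx : x ∈ Set.Ioo (0:ℝ) 1) :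
    (N:ℤ) ≤ ⌊(N:ℝ)/x⌋ := by
  rw [Int.le_floor]
  push_cast
  rw [le_div_iff₀ hx.1]
  nlinarith [hx.1, hx.2, (by exact_mod_cast hN : (1:ℝ) ≤ N)]

lemma iter_mem (N : ℕ) (hN : 1 ≤ N) {x : ℝ} (hx : x ∈ Set.Ioo (0:ℝ) 1) (hirr : Irrational x) :
    ∀ n, (TN N)^[n] x ∈ Set.Ioo (0:ℝ) 1 ∧ Irrational ((TN N)^[n] x) := by
  intro n
  induction n with
  | zero => exact ⟨hx, hirr⟩
  | succ n ih =>
    rw [Function.iterate_succ_apply']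
    exact TN_mem N hN ih.1 ih.2

lemma x_eq_Fcf (N : ℕ) (hN : 1 ≤ N) :
    ∀ n (x : ℝ), x ∈ Set.Ioo (0:ℝ) 1 → Irrational x →
      Fcf N n (fun k => ⌊(N:ℝ)/((TN N)^[k] x)⌋) ((TN N)^[n] x) = x := by
  intro n
  induction n with
  | zero => intro x _ _; rfl
  | succ n ih =>
    intro x hx hirr
    have hx0 : x ≠ 0 := ne_of_gt hx.1
    have hT := TN_mem N hN hx hirr
    have key : ∀ k, ((TN N)^[k+1]) x = ((TN N)^[k]) (TN N x) := fun k =>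
      Function.iterate_succ_apply (TN N) k x
    have hstep : Fcf N (n+1) (fun k => ⌊(N:ℝ)/((TN N)^[k] x)⌋) ((TN N)^[n+1] x)
        = (N:ℝ) / ((⌊(N:ℝ)/x⌋ : ℝ) + Fcf N n (fun k => ⌊(N:ℝ)/((TN N)^[k] (TN N x))⌋)
          ((TN N)^[n] (TN N x))) := by
      rw [Fcf]
      simp only [key, Function.iterate_zero_apply]
    rw [hstep, ih (TN N x) hT.1 hT.2]
    have hTNx : TN N x = (N:ℝ)/x - ⌊(N:ℝ)/x⌋ := by rw [TN, if_neg hx0]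
    have hNR : (1:ℝ) ≤ (N:ℝ) := by exact_mod_cast hN
    have hNne : ((N:ℝ)/x) ≠ 0 := div_ne_zero (by linarith) hx0
    rw [hTNx]
    have h1 : (⌊(N:ℝ)/x⌋:ℝ) + ((N:ℝ)/x - ⌊(N:ℝ)/x⌋) = (N:ℝ)/x := by ring
    rw [h1, div_div_eq_mul_div, mul_comm (N:ℝ) x, mul_div_assoc,
      div_self (by linarith : (N:ℝ) ≠ 0), mul_one]

lemma Fcf_mem (N : ℕ) (hN : 1 ≤ N) :
    ∀ n (a : ℕ → ℤ), (∀ k, (N:ℤ) ≤ a k) → ∀ t ∈ Set.Icc (0:ℝ) 1,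
      Fcf N n a t ∈ Set.Icc (0:ℝ) 1 := by
  intro n
  induction n with
  | zero => intro a _ t ht; exact ht
  | succ n ih =>
    intro a ha t ht
    have hNR : (1:ℝ) ≤ N := by exact_mod_cast hN
    have h0 : (N:ℝ) ≤ (a 0 : ℝ) := by exact_mod_cast ha 0
    have hmem := ih (fun k => a (k+1)) (fun k => ha (k+1)) t ht
    have hden : (N:ℝ) ≤ (a 0 : ℝ) + Fcf N n (fun k => a (k+1)) t := by
      linarith [hmem.1]
    have hdenpos : (0:ℝ) < (a 0 : ℝ) + Fcf N n (fun k => a (k+1)) t := by linarith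
    constructor
    · rw [Fcf]; positivity
    · rw [Fcf]
      rw [div_le_one hdenpos]
      linarith

lemma one_step (N : ℕ) (hN : 1 ≤ N) (A t s : ℝ) (hA : (N:ℝ) ≤ A)
    (ht : t ∈ Set.Icc (0:ℝ) 1) (hs : s ∈ Set.Icc (0:ℝ) 1) :
    |(N:ℝ)/(A + t) - (N:ℝ)/(A + s)| ≤ 1/2 := by
  have hNR : (1:ℝ) ≤ N := by exact_mod_cast hN
  have h1 : (0:ℝ) < A + t := by linarith [ht.1]
  have h2 : (0:ℝ) < A + s := by linarith [hs.1]
  have key : (N:ℝ)/(A + t) - (N:ℝ)/(A + s) = (N:ℝ)*(s - t)/((A+t)*(A+s)) := by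
    field_simp
    ring
  rw [key, abs_div, abs_of_pos (mul_pos h1 h2), div_le_iff₀ (mul_pos h1 h2),
    abs_mul, abs_of_pos (by linarith : (0:ℝ) < (N:ℝ))]
  rcases le_total t s with hts | hts
  · rw [abs_of_nonneg (by linarith)]
    nlinarith [mul_nonneg (by linarith [ht.1] : (0:ℝ) ≤ A - N + t) h2.le,
      mul_nonneg (by linarith : (0:ℝ) ≤ (N:ℝ)) (by linarith : (0:ℝ) ≤ A - N),
      mul_nonneg (by linarith : (0:ℝ) ≤ (N:ℝ))
        (by linarith [hs.2, ht.1] : (0:ℝ) ≤ (N:ℝ) - s + 2*t)]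
  · rw [abs_of_nonpos (by linarith)]
    nlinarith [mul_nonneg (by linarith [hs.1] : (0:ℝ) ≤ A - N + s) h1.le,
      mul_nonneg (by linarith : (0:ℝ) ≤ (N:ℝ)) (by linarith : (0:ℝ) ≤ A - N),
      mul_nonneg (by linarith : (0:ℝ) ≤ (N:ℝ))
        (by linarith [ht.2, hs.1] : (0:ℝ) ≤ (N:ℝ) - t + 2*s)]

lemma two_step (N : ℕ) (hN : 1 ≤ N) (A B u v : ℝ) (hA : (N:ℝ) ≤ A) (hB : (N:ℝ) ≤ B)
    (hu : u ∈ Set.Icc (0:ℝ) 1) (hv : v ∈ Set.Icc (0:ℝ) 1) :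
    |(N:ℝ)/(A + (N:ℝ)/(B + u)) - (N:ℝ)/(A + (N:ℝ)/(B + v))| ≤ |u - v|/4 := by
  have hNR : (1:ℝ) ≤ N := by exact_mod_cast hN
  have hApos : (0:ℝ) < A := by linarith
  have hBu : (0:ℝ) < B + u := by linarith [hu.1]
  have hBv : (0:ℝ) < B + v := by linarith [hv.1]
  have hDu : (0:ℝ) < A * (B + u) + N := by nlinarith
  have hDv : (0:ℝ) < A * (B + v) + N := by nlinarith
  have hd1 : (0:ℝ) < A + (N:ℝ)/(B + u) := by positivity
  have hd2 : (0:ℝ) < A + (N:ℝ)/(B + v) := by positivity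
  have key : (N:ℝ)/(A + (N:ℝ)/(B + u)) - (N:ℝ)/(A + (N:ℝ)/(B + v))
      = (N:ℝ)^2 * (u - v) / ((A*(B+u)+N)*(A*(B+v)+N)) := by
    rw [div_sub_div _ _ hd1.ne' hd2.ne']
    rw [div_eq_div_iff (by positivity) (by positivity)]
    field_simp
    ring
  have hNNu : (N:ℝ)*(N:ℝ) ≤ A*(B+u) :=
    mul_le_mul hA (by linarith [hu.1]) (by linarith) (by linarith)
  have hNNv : (N:ℝ)*(N:ℝ) ≤ A*(B+v) :=
    mul_le_mul hA (by linarith [hv.1]) (by linarith) (by linarith)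
  have hDu2 : 2*(N:ℝ) ≤ A*(B+u)+N := by nlinarith
  have hDv2 : 2*(N:ℝ) ≤ A*(B+v)+N := by nlinarith
  rw [key, abs_div, abs_of_pos (mul_pos hDu hDv), div_le_iff₀ (mul_pos hDu hDv),
    abs_mul, abs_of_nonneg (by positivity : (0:ℝ) ≤ (N:ℝ)^2)]
  have habs : (0:ℝ) ≤ |u - v| := abs_nonneg _
  nlinarith [mul_nonneg habs (mul_nonneg (by linarith : (0:ℝ) ≤ A*(B+u)+N - 2*N) hDv.le),
    mul_nonneg habs (mul_nonneg (by linarith : (0:ℝ) ≤ 2*(N:ℝ))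
      (by linarith : (0:ℝ) ≤ A*(B+v)+N - 2*N))]

lemma contraction (N : ℕ) (hN : 1 ≤ N) :
    ∀ n (a : ℕ → ℤ), (∀ k, (N:ℤ) ≤ a k) → ∀ t s, t ∈ Set.Icc (0:ℝ) 1 → s ∈ Set.Icc (0:ℝ) 1 →
      |Fcf N n a t - Fcf N n a s| ≤ (1/2:ℝ)^n := by
  intro n
  induction n using Nat.twoStepInduction with
  | zero =>
    intro a _ t s ht hs
    simp only [Fcf, pow_zero]
    rw [abs_sub_le_iff]
    constructor <;> linarith [ht.1, ht.2, hs.1, hs.2]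
  | one =>
    intro a ha t s ht hs
    have h0 : (N:ℝ) ≤ (a 0 : ℝ) := by exact_mod_cast ha 0
    have := one_step N hN (a 0 : ℝ) t s h0 ht hs
    simp only [Fcf]
    calc |(N:ℝ)/((a 0 : ℝ) + t) - (N:ℝ)/((a 0 : ℝ) + s)| ≤ 1/2 := this
      _ = (1/2:ℝ)^1 := by norm_num
  | more n ih _ =>
    intro a ha t s ht hs
    have h0 : (N:ℝ) ≤ (a 0 : ℝ) := by exact_mod_cast ha 0
    have h1 : (N:ℝ) ≤ (a 1 : ℝ) := by exact_mod_cast ha 1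
    have hu := Fcf_mem N hN n (fun k => a (k+2)) (fun k => ha (k+2)) t ht
    have hv := Fcf_mem N hN n (fun k => a (k+2)) (fun k => ha (k+2)) s hs
    have h2 := two_step N hN (a 0 : ℝ) (a 1 : ℝ)
      (Fcf N n (fun k => a (k+2)) t) (Fcf N n (fun k => a (k+2)) s) h0 h1 hu hv
    have h3 := ih (fun k => a (k+2)) (fun k => ha (k+2)) t s ht hs
    simp only [Fcf]
    calc |(N:ℝ)/((a 0 : ℝ) + (N:ℝ)/((a 1 : ℝ) + Fcf N n (fun k => a (k+1+1)) t))
          - (N:ℝ)/((a 0 : ℝ) + (N:ℝ)/((a 1 : ℝ) + Fcf N n (fun k => a (k+1+1)) s))|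
        ≤ |Fcf N n (fun k => a (k+2)) t - Fcf N n (fun k => a (k+2)) s|/4 := h2
      _ ≤ (1/2:ℝ)^n / 4 := by
          apply div_le_div_of_nonneg_right h3 (by norm_num) |>.trans_eq rfl
      _ = (1/2:ℝ)^(n+2) := by ring

theorem N_continued_fraction_converges (N : ℕ) (hN : 1 ≤ N) :
    ∀ x ∈ Set.Ioo (0 : ℝ) 1, Irrational x →
      Filter.Tendsto (fun n => cfValN N n (fun k => ⌊(N : ℝ) / ((TN N)^[k] x)⌋))
        Filter.atTop (nhds x) := by
  intro x hx hirr
  set a : ℕ → ℤ := fun k => ⌊(N : ℝ) / ((TN N)^[k] x)⌋ with ha_def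
  have ha : ∀ k, (N:ℤ) ≤ a k := fun k => digit_ge N hN (iter_mem N hN hx hirr k).1
  have hbound : ∀ n, |cfValN N n a - x| ≤ (1/2:ℝ)^n := by
    intro n
    have hx_eq := x_eq_Fcf N hN n x hx hirr
    have hmem : (TN N)^[n] x ∈ Set.Icc (0:ℝ) 1 :=
      Set.Ioo_subset_Icc_self (iter_mem N hN hx hirr n).1
    have := contraction N hN n a ha 0 ((TN N)^[n] x)
      ⟨le_refl 0, zero_le_one⟩ hmem
    rw [cfValN_eq_Fcf]
    calc |Fcf N n a 0 - x| = |Fcf N n a 0 - Fcf N n a ((TN N)^[n] x)| := by rw [hx_eq]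
      _ ≤ (1/2:ℝ)^n := this
  have h0 : Filter.Tendsto (fun n => ((1:ℝ)/2)^n) Filter.atTop (nhds 0) :=
    tendsto_pow_atTop_nhds_zero_of_lt_one (by norm_num) (by norm_num)
  have hsq := squeeze_zero (fun n => abs_nonneg _) hbound h0
  rw [tendsto_iff_norm_sub_tendsto_zero]
  simpa [Real.norm_eq_abs] using hsq
end
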